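/- arXiv:2411.12627 — 3 statements merged into one kernel-verified Lean document; each statement's English description precedes it below -/
import Mathlib

section
/- Theorem 1, third case (explicit part): Without the monotone first step, the fully explicit (θ = 0) Zalesak FCT scheme is not TVD for any CFL number: for every a ≠ 0 and every λ > 0 with λ|a| ≤ 1, there exists a grid function u with TV(u) < ∞ such that the grid function v defined by v_j = u_j − λ[f̂_{j+1/2}(u) − f̂_{j−1/2}(u)] satisfies TV(v) > TV(u). -/
/-!
On the staircase with increments `λa, 2, 2` (for `a > 0`, `λa ≤ 2`) Zalesak's limiter passes the
full antidiffusive flux `a` through the middle interface: it compares that flux with `λ⁻¹` times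
the neighbouring increments, not with what the upwind step leaves of them. Subtracting `λa` at the
foot of the staircase then moves the first step from `λa` to `-(λa)²`, below the flat state on its
left, and this undershoot adds `2(λa)²` to the total variation. The scheme commutes with the
reflection `j ↦ -j` up to the sign of the speed, so `a < 0` reduces to `-a > 0`.
-/

/-- Total variation of a grid function `u : ℤ → ℝ`, a value in `[0, ∞]`. -/
noncomputable def TV (u : ℤ → ℝ) : ENNReal :=
  ∑' j : ℤ, ENNReal.ofReal |u (j + 1) - u j|

/-- The second-order central antidiffusive flux `f̂^{AD}_{j+1/2}(w) = (|a|/2)·Δ_{j+1/2}w`. -/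
noncomputable def fluxAD (a : ℝ) (w : ℤ → ℝ) (j : ℤ) : ℝ :=
  |a| / 2 * (w (j + 1) - w j)

/-- Zalesak's limited antidiffusive flux:
`f̂^C_{j+1/2}(w) = S·max{0, min(S·λ⁻¹·Δ_{j−1/2}w, |f̂^{AD}_{j+1/2}(w)|, S·λ⁻¹·Δ_{j+3/2}w)}`
with `S = sign(f̂^{AD}_{j+1/2}(w))` (so it vanishes when the antidiffusive flux does). -/
noncomputable def fluxC (a lam : ℝ) (w : ℤ → ℝ) (j : ℤ) : ℝ :=
  Real.sign (fluxAD a w j) *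
    max 0 (min (Real.sign (fluxAD a w j) * (lam⁻¹ * (w j - w (j - 1))))
      (min |fluxAD a w j|
        (Real.sign (fluxAD a w j) * (lam⁻¹ * (w (j + 2) - w (j + 1))))))

/-- Zalesak's FCT numerical flux (without the diffusive first step):
`f̂_{j+1/2}(w) = (1/2)[a(w_j + w_{j+1}) − |a|·Δ_{j+1/2}w] + f̂^C_{j+1/2}(w)`. -/
noncomputable def numFlux (a lam : ℝ) (w : ℤ → ℝ) (j : ℤ) : ℝ :=
  (1 / 2) * (a * (w j + w (j + 1)) - |a| * (w (j + 1) - w j)) + fluxC a lam w j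

noncomputable def zalesakStep (a lam : ℝ) (u : ℤ → ℝ) : ℤ → ℝ :=
  fun j => u j - lam * (numFlux a lam u j - numFlux a lam u (j - 1))

def reflect (w : ℤ → ℝ) : ℤ → ℝ := fun j => w (-j)

theorem ofReal_sum_le_TV (w : ℤ → ℝ) (s : Finset ℤ) :
    ENNReal.ofReal (∑ j ∈ s, |w (j + 1) - w j|) ≤ TV w := by
  rw [ENNReal.ofReal_sum_of_nonneg fun _ _ => abs_nonneg _]
  exact ENNReal.sum_le_tsum s

theorem TV_eq_ofReal_sum (w : ℤ → ℝ) (s : Finset ℤ) (h : ∀ j ∉ s, w (j + 1) = w j) :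
    TV w = ENNReal.ofReal (∑ j ∈ s, |w (j + 1) - w j|) := by
  rw [ENNReal.ofReal_sum_of_nonneg fun _ _ => abs_nonneg _, TV]
  exact tsum_eq_sum fun j hj => by simp [h j hj]

theorem TV_reflect (w : ℤ → ℝ) : TV (reflect w) = TV w := by
  rw [TV, TV, ← (Equiv.subLeft (-1 : ℤ)).tsum_eq]
  congr 1 with j
  rw [abs_sub_comm]
  simp only [reflect, Equiv.subLeft_apply]
  congr 4 <;> ring

theorem fluxC_eq_zero_of_flat {a lam : ℝ} {w : ℤ → ℝ} {j : ℤ}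
    (h : w j = w (j - 1) ∨ w (j + 1) = w j ∨ w (j + 2) = w (j + 1)) :
    fluxC a lam w j = 0 := by
  rcases h with h | h | h <;> simp [fluxC, fluxAD, h]

theorem fluxC_of_lt {a lam : ℝ} {w : ℤ → ℝ} {j : ℤ} (ha : a ≠ 0) (h : w j < w (j + 1)) :
    fluxC a lam w j = max 0 (min (lam⁻¹ * (w j - w (j - 1)))
      (min (|a| / 2 * (w (j + 1) - w j)) (lam⁻¹ * (w (j + 2) - w (j + 1))))) := by
  have hAD : 0 < fluxAD a w j := mul_pos (by positivity) (sub_pos.2 h)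
  rw [fluxC, Real.sign_of_pos hAD, abs_of_pos hAD, fluxAD]
  simp only [one_mul]

theorem fluxC_neg_speed (a lam : ℝ) (w : ℤ → ℝ) (j : ℤ) :
    fluxC (-a) lam w j = fluxC a lam w j := by
  simp only [fluxC, fluxAD, abs_neg]

theorem fluxC_reflect (a lam : ℝ) (w : ℤ → ℝ) (j : ℤ) :
    fluxC a lam (reflect w) j = -fluxC a lam w (-j - 1) := by
  obtain ⟨m, rfl⟩ : ∃ m, j = -m - 1 := ⟨-j - 1, by ring⟩
  have e : ∀ k n, k = -n → reflect w k = w n := fun k n h => by rw [reflect, h, neg_neg]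
  rw [show -(-m - 1) - 1 = m by ring, fluxC, fluxC, fluxAD, fluxAD,
    e (-m - 1) (m + 1) (by ring), e (-m - 1 + 1) m (by ring), e (-m - 1 - 1) (m + 2) (by ring),
    e (-m - 1 + 2) (m - 1) (by ring), show w m - w (m + 1) = -(w (m + 1) - w m) by ring,
    mul_neg, Real.sign_neg, abs_neg]
  set S := Real.sign (|a| / 2 * (w (m + 1) - w m))
  rw [show -S * (lam⁻¹ * (w (m + 1) - w (m + 2))) = S * (lam⁻¹ * (w (m + 2) - w (m + 1))) by ring,
    show -S * (lam⁻¹ * (w (m - 1) - w m)) = S * (lam⁻¹ * (w m - w (m - 1))) by ring,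
    neg_mul]
  ac_rfl

theorem numFlux_reflect (a lam : ℝ) (w : ℤ → ℝ) (j : ℤ) :
    numFlux a lam (reflect w) j = -numFlux (-a) lam w (-j - 1) := by
  simp only [numFlux, fluxC_reflect, fluxC_neg_speed, reflect, abs_neg]
  rw [show -(j + 1) = -j - 1 by ring, show -j - 1 + 1 = -j by ring]
  ring

theorem zalesakStep_reflect (a lam : ℝ) (w : ℤ → ℝ) :
    zalesakStep a lam (reflect w) = reflect (zalesakStep (-a) lam w) := by
  ext j
  simp only [zalesakStep, numFlux_reflect, reflect]
  rw [show -(j - 1) - 1 = -j by ring]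
  ring

theorem zalesakStep_of_pos {a lam : ℝ} (ha : 0 < a) (u : ℤ → ℝ) (j : ℤ) :
    zalesakStep a lam u j = u j - lam * a * (u j - u (j - 1))
      - lam * (fluxC a lam u j - fluxC a lam u (j - 1)) := by
  simp only [zalesakStep, numFlux, abs_of_pos ha, sub_add_cancel]
  ring

def staircase (ν : ℝ) : ℤ → ℝ := fun j =>
  if j ≤ 0 then 0 else if j = 1 then ν else if j = 2 then ν + 2 else ν + 4

theorem TV_staircase {ν : ℝ} (hν : 0 ≤ ν) : TV (staircase ν) = ENNReal.ofReal (ν + 4) := by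
  rw [TV_eq_ofReal_sum _ {0, 1, 2} fun j hj => by
    simp only [Finset.mem_insert, Finset.mem_singleton] at hj
    simp only [staircase]
    split_ifs <;> first | rfl | omega]
  norm_num [staircase, abs_of_nonneg hν]

theorem fluxC_staircase {a lam : ℝ} (ha : 0 < a) (hlam : 0 < lam) (hCFL : lam * a ≤ 2) (j : ℤ) :
    fluxC a lam (staircase (lam * a)) j = if j = 1 then a else 0 := by
  split_ifs with hj
  · have h2 : a ≤ lam⁻¹ * 2 := by rwa [le_inv_mul_iff₀ hlam]
    subst hj
    rw [fluxC_of_lt ha.ne' (by norm_num [staircase])]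
    norm_num [staircase, abs_of_pos ha, inv_mul_cancel_left₀ hlam.ne', h2, ha.le]
  · apply fluxC_eq_zero_of_flat
    simp only [staircase]
    split_ifs <;> first | omega | simp

theorem exists_TV_lt_TV_zalesakStep_of_pos {a lam : ℝ} (ha : 0 < a) (hlam : 0 < lam)
    (hCFL : lam * a ≤ 2) :
    ∃ u : ℤ → ℝ, TV u < ⊤ ∧ TV u < TV (zalesakStep a lam u) := by
  have hC := fluxC_staircase ha hlam hCFL
  set ν := lam * a with hν
  have hν0 : 0 < ν := mul_pos hlam ha
  set v := zalesakStep a lam (staircase ν)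
  have hv : ∀ j, v j = staircase ν j - ν * (staircase ν j - staircase ν (j - 1))
      - lam * (fluxC a lam (staircase ν) j - fluxC a lam (staircase ν) (j - 1)) :=
    zalesakStep_of_pos ha _
  have v0 : v 0 = 0 := by norm_num [hv, hC, staircase]
  have v1 : v 1 = -ν ^ 2 := by norm_num [hv, hC, staircase, ← hν]; ring
  have v2 : v 2 = 2 := by norm_num [hv, hC, staircase, ← hν]; ring
  have v3 : v 3 = 4 - ν := by norm_num [hv, hC, staircase]; ring
  have v4 : v 4 = ν + 4 := by norm_num [hv, hC, staircase]
  refine ⟨staircase ν, by simp [TV_staircase hν0.le], ?_⟩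
  calc TV (staircase ν) = ENNReal.ofReal (ν + 4) := TV_staircase hν0.le
    _ < ENNReal.ofReal (∑ j ∈ {0, 1, 2, 3}, |v (j + 1) - v j|) := by
      rw [ENNReal.ofReal_lt_ofReal_iff_of_nonneg (by positivity)]
      norm_num [v0, v1, v2, v3, v4]
      linarith [le_abs_self (2 + ν ^ 2), le_abs_self (4 - ν - 2), le_abs_self (ν + 4 - (4 - ν)),
        pow_pos hν0 2]
    _ ≤ TV v := ofReal_sum_le_TV _ _

/-- Theorem 1, third case (explicit part): without the monotone first step, the fully
explicit Zalesak FCT scheme is not TVD for any CFL number: for every `a ≠ 0` and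
`λ > 0` with `λ|a| ≤ 1` there is a grid function `u` of finite total variation whose
explicit update `v_j = u_j − λ[f̂_{j+1/2}(u) − f̂_{j−1/2}(u)]` has `TV(v) > TV(u)`. -/
theorem zalesak_explicit_not_TVD (a : ℝ) (ha : a ≠ 0) (lam : ℝ) (hlam : 0 < lam)
    (hCFL : lam * |a| ≤ 1) :
    ∃ u : ℤ → ℝ, TV u < ⊤ ∧
      TV u < TV (fun j => u j - lam * (numFlux a lam u j - numFlux a lam u (j - 1))) := by
  rcases ha.lt_or_gt with hneg | hpos
  · obtain ⟨w, hw_fin, hw_lt⟩ := exists_TV_lt_TV_zalesakStep_of_pos (neg_pos.2 hneg) hlam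
      (by rw [abs_of_neg hneg] at hCFL; linarith)
    refine ⟨reflect w, by rwa [TV_reflect], ?_⟩
    change TV (reflect w) < TV (zalesakStep a lam (reflect w))
    rwa [zalesakStep_reflect, TV_reflect, TV_reflect]
  · exact exists_TV_lt_TV_zalesakStep_of_pos hpos hlam (by rw [abs_of_pos hpos] at hCFL; linarith)
end

section
/- Theorem 1, third case (implicit part): For θ ∈ (0,1), the implicit θ-scheme built from Zalesak's FCT flux without the monotone first step is TVD under the condition λ|a| < θ/(1−θ): if λ|a| < θ/(1−θ) and u, v are grid functions with TV(v) < ∞ satisfying v_j = u_j − λ(1−θ)[f̂_{j+1/2}(u) − f̂_{j−1/2}(u)] − λθ[f̂_{j+1/2}(v) − f̂_{j−1/2}(v)] for all j ∈ ℤ, then TV(v) ≤ TV(u). -/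
lemma sign_mul_eq_abs (t : ℝ) : Real.sign t * t = |t| := by
  rcases lt_trichotomy t 0 with h|h|h
  · rw [Real.sign_of_neg h, abs_of_neg h]; ring
  · simp [h]
  · rw [Real.sign_of_pos h, abs_of_pos h]; ring

lemma abs_sign_le (t : ℝ) : |Real.sign t| ≤ 1 := by
  rcases lt_trichotomy t 0 with h|h|h <;> simp [Real.sign_of_neg, Real.sign_of_pos, *]

lemma sign_sq_le (t : ℝ) : Real.sign t * Real.sign t ≤ 1 := by
  rcases lt_trichotomy t 0 with h|h|h <;> simp [Real.sign_of_neg, Real.sign_of_pos, *] <;> norm_num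

lemma key_prod (S m c x : ℝ) (hS2 : S * S ≤ 1) (hc : 0 ≤ c) (hm : 0 ≤ m)
    (h : m = 0 ∨ m ≤ S * (c * x)) :
    0 ≤ S * m * x ∧ S * m * x ≤ c * x ^ 2 := by
  rcases h with h | h
  · constructor
    · simp [h]
    · simp [h]; positivity
  · rcases hm.eq_or_lt with hm0 | hm0
    · constructor
      · simp [← hm0]
      · simp [← hm0]; positivity
    · have hcx : 0 < S * (c * x) := lt_of_lt_of_le hm0 h
      have hc0 : 0 < c := by
        rcases hc.eq_or_lt with h' | h'
        · exfalso; rw [← h'] at hcx; simp at hcx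
        · exact h'
      have hSx : 0 < S * x := by nlinarith
      constructor
      · nlinarith
      · nlinarith [mul_le_mul_of_nonneg_right h hSx.le, mul_le_mul_of_nonneg_left hS2 (mul_nonneg hc (sq_nonneg x))]

lemma key_abs (S m c x : ℝ) (hS : |S| ≤ 1) (hc : 0 ≤ c) (hm : 0 ≤ m)
    (h : m = 0 ∨ m ≤ S * (c * x)) : |S * m| ≤ c * |x| := by
  rcases h with h | h
  · simp [h]; positivity
  · calc |S * m| = |S| * m := by rw [abs_mul, abs_of_nonneg hm]
    _ ≤ m := by nlinarith
    _ ≤ S * (c * x) := h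
    _ ≤ |S * (c * x)| := le_abs_self _
    _ = |S| * (c * |x|) := by rw [abs_mul, abs_mul, abs_of_nonneg hc]
    _ ≤ c * |x| := by nlinarith [abs_nonneg x, mul_nonneg hc (abs_nonneg x)]


lemma fluxC_rep (a lam : ℝ) (w : ℤ → ℝ) (j : ℤ) :
    ∃ m : ℝ, fluxC a lam w j = Real.sign (fluxAD a w j) * m ∧ 0 ≤ m ∧
      (m = 0 ∨ (m ≤ Real.sign (fluxAD a w j) * (lam⁻¹ * (w j - w (j - 1))) ∧
        m ≤ |fluxAD a w j| ∧
        m ≤ Real.sign (fluxAD a w j) * (lam⁻¹ * (w (j + 2) - w (j + 1))))) := by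
  refine ⟨_, rfl, le_max_left _ _, (max_choice _ _).imp id (fun h => ?_)⟩
  exact ⟨h.le.trans (min_le_left _ _), h.le.trans ((min_le_right _ _).trans (min_le_left _ _)),
    h.le.trans ((min_le_right _ _).trans (min_le_right _ _))⟩

lemma fluxC_left (a lam : ℝ) (w : ℤ → ℝ) (j : ℤ) (hlam : 0 < lam) :
    (0 ≤ fluxC a lam w j * (w j - w (j-1)) ∧
      fluxC a lam w j * (w j - w (j-1)) ≤ lam⁻¹ * (w j - w (j-1)) ^ 2) ∧
    |fluxC a lam w j| ≤ lam⁻¹ * |w j - w (j-1)| := by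
  obtain ⟨m, hrep, hm, hsel⟩ := fluxC_rep a lam w j
  rw [hrep]
  have h := hsel.imp id (fun h => h.1)
  exact ⟨key_prod _ _ _ _ (sign_sq_le _) (by positivity) hm h,
    key_abs _ _ _ _ (abs_sign_le _) (by positivity) hm h⟩

lemma fluxC_own (a lam : ℝ) (w : ℤ → ℝ) (j : ℤ) (hlam : 0 < lam) :
    (0 ≤ fluxC a lam w j * (w (j+1) - w j) ∧
      fluxC a lam w j * (w (j+1) - w j) ≤ |a|/2 * (w (j+1) - w j) ^ 2) ∧
    |fluxC a lam w j| ≤ |a|/2 * |w (j+1) - w j| := by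
  obtain ⟨m, hrep, hm, hsel⟩ := fluxC_rep a lam w j
  rw [hrep]
  have habs : |fluxAD a w j| = Real.sign (fluxAD a w j) * (|a|/2 * (w (j+1) - w j)) := by
    rw [show |a|/2 * (w (j+1) - w j) = fluxAD a w j from rfl, sign_mul_eq_abs]
  have h := hsel.imp id (fun h => habs ▸ h.2.1)
  exact ⟨key_prod _ _ _ _ (sign_sq_le _) (by positivity) hm h,
    key_abs _ _ _ _ (abs_sign_le _) (by positivity) hm h⟩

lemma fluxC_right (a lam : ℝ) (w : ℤ → ℝ) (j : ℤ) (hlam : 0 < lam) :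
    (0 ≤ fluxC a lam w j * (w (j+2) - w (j+1)) ∧
      fluxC a lam w j * (w (j+2) - w (j+1)) ≤ lam⁻¹ * (w (j+2) - w (j+1)) ^ 2) ∧
    |fluxC a lam w j| ≤ lam⁻¹ * |w (j+2) - w (j+1)| := by
  obtain ⟨m, hrep, hm, hsel⟩ := fluxC_rep a lam w j
  rw [hrep]
  have h := hsel.imp id (fun h => h.2.2)
  exact ⟨key_prod _ _ _ _ (sign_sq_le _) (by positivity) hm h,
    key_abs _ _ _ _ (abs_sign_le _) (by positivity) hm h⟩

set_option maxHeartbeats 1000000 in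
lemma flux_incr (a lam : ℝ) (ha : a ≠ 0) (hlam : 0 < lam) (w : ℤ → ℝ) :
    ∃ C D : ℤ → ℝ, (∀ j, 0 ≤ C j) ∧ (∀ j, 0 ≤ D j) ∧
      (∀ j k, C j + D k ≤ |a| + lam⁻¹) ∧
      (∀ j, numFlux a lam w j - numFlux a lam w (j-1)
        = D j * (w j - w (j-1)) - C j * (w (j+1) - w j)) := by
  rcases ha.lt_or_gt with hneg | hpos
  · -- a < 0 : use C only
    have habs : |a| = -a := abs_of_neg hneg
    have key : ∀ j : ℤ, numFlux a lam w j - numFlux a lam w (j-1)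
        = a * (w (j+1) - w j) + fluxC a lam w j - fluxC a lam w (j-1) := by
      intro j
      have hj : j - 1 + 1 = j := by ring
      simp only [numFlux, hj, habs]
      ring
    have P : ∀ j : ℤ, 0 ≤ -(numFlux a lam w j - numFlux a lam w (j-1)) * (w (j+1) - w j) ∧
        -(numFlux a lam w j - numFlux a lam w (j-1)) * (w (j+1) - w j)
          ≤ (|a| + lam⁻¹) * (w (j+1) - w j)^2 := by
      intro j
      have h1 := (fluxC_own a lam w j hlam).1
      have h2 := (fluxC_right a lam w (j-1) hlam).1
      have hj : j - 1 + 1 = j := by ring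
      have hj2 : j - 1 + 2 = j + 1 := by ring
      rw [hj, hj2] at h2
      rw [key j]
      constructor <;> nlinarith [h1.1, h1.2, h2.1, h2.2, sq_nonneg (w (j+1) - w j)]
    have Z : ∀ j : ℤ, w (j+1) - w j = 0 → numFlux a lam w j - numFlux a lam w (j-1) = 0 := by
      intro j hx
      have hg1 : fluxC a lam w j = 0 := by
        have h1 := (fluxC_own a lam w j hlam).2
        rw [hx] at h1; simp at h1
        exact h1
      have hg2 : fluxC a lam w (j-1) = 0 := by
        have h2 := (fluxC_right a lam w (j-1) hlam).2
        have hj : j - 1 + 1 = j := by ring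
        have hj2 : j - 1 + 2 = j + 1 := by ring
        rw [hj, hj2, hx] at h2; simp at h2
        exact h2
      rw [key j, hg1, hg2, hx]; ring
    refine ⟨fun j => if hx : w (j+1) - w j = 0 then 0
        else -(numFlux a lam w j - numFlux a lam w (j-1)) / (w (j+1) - w j),
      fun _ => 0, ?_, fun _ => le_refl 0, ?_, ?_⟩
    · intro j
      by_cases hx : w (j+1) - w j = 0
      · simp [hx]
      · simp only [hx, dif_neg, not_false_iff]
        have hx2 : (0:ℝ) < (w (j+1) - w j)^2 := by positivity
        have heq : -(numFlux a lam w j - numFlux a lam w (j-1)) / (w (j+1) - w j)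
            = (-(numFlux a lam w j - numFlux a lam w (j-1)) * (w (j+1) - w j)) / (w (j+1) - w j)^2 := by
          field_simp
        rw [heq]
        exact div_nonneg (P j).1 hx2.le
    · intro j k
      simp only [add_zero]
      by_cases hx : w (j+1) - w j = 0
      · simp only [hx, dif_pos]
        positivity
      · simp only [hx, dif_neg, not_false_iff]
        have hx2 : (0:ℝ) < (w (j+1) - w j)^2 := by positivity
        have heq : -(numFlux a lam w j - numFlux a lam w (j-1)) / (w (j+1) - w j)
            = (-(numFlux a lam w j - numFlux a lam w (j-1)) * (w (j+1) - w j)) / (w (j+1) - w j)^2 := by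
          field_simp
        rw [heq, div_le_iff₀ hx2]
        exact (P j).2
    · intro j
      by_cases hx : w (j+1) - w j = 0
      · simp only [hx, dif_pos, zero_mul, mul_zero, sub_zero, zero_sub, neg_zero]
        exact Z j hx
      · simp only [hx, dif_neg, not_false_iff, zero_mul, zero_sub]
        field_simp
  · -- 0 < a : use D only
    have habs : |a| = a := abs_of_pos hpos
    have key : ∀ j : ℤ, numFlux a lam w j - numFlux a lam w (j-1)
        = a * (w j - w (j-1)) + fluxC a lam w j - fluxC a lam w (j-1) := by
      intro j
      have hj : j - 1 + 1 = j := by ring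
      simp only [numFlux, hj, habs]
      ring
    have P : ∀ j : ℤ, 0 ≤ (numFlux a lam w j - numFlux a lam w (j-1)) * (w j - w (j-1)) ∧
        (numFlux a lam w j - numFlux a lam w (j-1)) * (w j - w (j-1))
          ≤ (|a| + lam⁻¹) * (w j - w (j-1))^2 := by
      intro j
      have h1 := (fluxC_left a lam w j hlam).1
      have h2 := (fluxC_own a lam w (j-1) hlam).1
      have hj : j - 1 + 1 = j := by ring
      rw [hj] at h2
      rw [key j]
      constructor <;> nlinarith [h1.1, h1.2, h2.1, h2.2, sq_nonneg (w j - w (j-1))]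
    have Z : ∀ j : ℤ, w j - w (j-1) = 0 → numFlux a lam w j - numFlux a lam w (j-1) = 0 := by
      intro j hx
      have hg1 : fluxC a lam w j = 0 := by
        have h1 := (fluxC_left a lam w j hlam).2
        rw [hx] at h1; simp at h1
        exact h1
      have hg2 : fluxC a lam w (j-1) = 0 := by
        have h2 := (fluxC_own a lam w (j-1) hlam).2
        have hj : j - 1 + 1 = j := by ring
        rw [hj, hx] at h2; simp at h2
        exact h2
      rw [key j, hg1, hg2, hx]; ring
    refine ⟨fun _ => 0,
      fun j => if hx : w j - w (j-1) = 0 then 0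
        else (numFlux a lam w j - numFlux a lam w (j-1)) / (w j - w (j-1)),
      fun _ => le_refl 0, ?_, ?_, ?_⟩
    · intro j
      by_cases hx : w j - w (j-1) = 0
      · simp [hx]
      · simp only [hx, dif_neg, not_false_iff]
        have hx2 : (0:ℝ) < (w j - w (j-1))^2 := by positivity
        have heq : (numFlux a lam w j - numFlux a lam w (j-1)) / (w j - w (j-1))
            = ((numFlux a lam w j - numFlux a lam w (j-1)) * (w j - w (j-1))) / (w j - w (j-1))^2 := by
          field_simp
        rw [heq]
        exact div_nonneg (P j).1 hx2.le
    · intro j k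
      simp only [zero_add]
      by_cases hx : w k - w (k-1) = 0
      · simp only [hx, dif_pos]
        positivity
      · simp only [hx, dif_neg, not_false_iff]
        have hx2 : (0:ℝ) < (w k - w (k-1))^2 := by positivity
        have heq : (numFlux a lam w k - numFlux a lam w (k-1)) / (w k - w (k-1))
            = ((numFlux a lam w k - numFlux a lam w (k-1)) * (w k - w (k-1))) / (w k - w (k-1))^2 := by
          field_simp
        rw [heq, div_le_iff₀ hx2]
        exact (P k).2
    · intro j
      by_cases hx : w j - w (j-1) = 0
      · simp only [hx, dif_pos, zero_mul, mul_zero, sub_zero, zero_sub, neg_zero]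
        exact Z j hx
      · simp only [hx, dif_neg, not_false_iff, zero_mul, sub_zero]
        field_simp

lemma tsum_shift_up (f : ℤ → ENNReal) : ∑' j : ℤ, f (j+1) = ∑' j, f j :=
  (Equiv.addRight 1).tsum_eq f

lemma tsum_shift_down (f : ℤ → ENNReal) : ∑' j : ℤ, f (j-1) = ∑' j, f j :=
  (Equiv.subRight 1).tsum_eq f

lemma hartenExplicit (u v C D : ℤ → ℝ)
    (hC : ∀ j, 0 ≤ C j) (hD : ∀ j, 0 ≤ D j) (hCD : ∀ j, C j + D (j+1) ≤ 1)
    (h : ∀ j, v j = u j + C j * (u (j+1) - u j) - D j * (u j - u (j-1))) :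
    TV v ≤ TV u := by
  have key : ∀ j : ℤ, ENNReal.ofReal |v (j+1) - v j| ≤
      ENNReal.ofReal ((1 - C j - D (j+1)) * |u (j+1) - u j|)
      + (ENNReal.ofReal (C (j+1) * |u (j+1+1) - u (j+1)|)
      + ENNReal.ofReal (D j * |u j - u (j-1)|)) := by
    intro j
    have h1 : v (j+1) - v j = (1 - C j - D (j+1)) * (u (j+1) - u j)
        + (C (j+1) * (u (j+1+1) - u (j+1)) + D j * (u j - u (j-1))) := by
      have e2 := h (j+1)
      rw [show (j+1) - 1 = j from by ring] at e2
      rw [h j, e2]; ring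
    have hco : 0 ≤ 1 - C j - D (j+1) := by have := hCD j; linarith
    have htri : |v (j+1) - v j| ≤ (1 - C j - D (j+1)) * |u (j+1) - u j|
        + (C (j+1) * |u (j+1+1) - u (j+1)| + D j * |u j - u (j-1)|) := by
      rw [h1]
      calc |(1 - C j - D (j+1)) * (u (j+1) - u j)
          + (C (j+1) * (u (j+1+1) - u (j+1)) + D j * (u j - u (j-1)))|
          ≤ |(1 - C j - D (j+1)) * (u (j+1) - u j)|
            + (|C (j+1) * (u (j+1+1) - u (j+1))| + |D j * (u j - u (j-1))|) := by
            exact (abs_add_le _ _).trans (by gcongr; exact abs_add_le _ _)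
        _ = (1 - C j - D (j+1)) * |u (j+1) - u j|
            + (C (j+1) * |u (j+1+1) - u (j+1)| + D j * |u j - u (j-1)|) := by
            rw [abs_mul, abs_mul, abs_mul, abs_of_nonneg hco,
              abs_of_nonneg (hC (j+1)), abs_of_nonneg (hD j)]
    calc ENNReal.ofReal |v (j+1) - v j|
        ≤ ENNReal.ofReal ((1 - C j - D (j+1)) * |u (j+1) - u j|
          + (C (j+1) * |u (j+1+1) - u (j+1)| + D j * |u j - u (j-1)|)) :=
          ENNReal.ofReal_le_ofReal htri
      _ = _ := by
          rw [ENNReal.ofReal_add (mul_nonneg hco (abs_nonneg _))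
              (add_nonneg (mul_nonneg (hC (j+1)) (abs_nonneg _)) (mul_nonneg (hD j) (abs_nonneg _))),
            ENNReal.ofReal_add (mul_nonneg (hC (j+1)) (abs_nonneg _)) (mul_nonneg (hD j) (abs_nonneg _))]
  calc TV v ≤ ∑' j : ℤ, (ENNReal.ofReal ((1 - C j - D (j+1)) * |u (j+1) - u j|)
      + (ENNReal.ofReal (C (j+1) * |u (j+1+1) - u (j+1)|)
      + ENNReal.ofReal (D j * |u j - u (j-1)|))) :=
      Summable.tsum_le_tsum key ENNReal.summable ENNReal.summable
    _ = (∑' j : ℤ, ENNReal.ofReal ((1 - C j - D (j+1)) * |u (j+1) - u j|))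
      + ((∑' j : ℤ, ENNReal.ofReal (C (j+1) * |u (j+1+1) - u (j+1)|))
      + (∑' j : ℤ, ENNReal.ofReal (D j * |u j - u (j-1)|))) := by
      rw [ENNReal.tsum_add, ENNReal.tsum_add]
    _ = (∑' j : ℤ, ENNReal.ofReal ((1 - C j - D (j+1)) * |u (j+1) - u j|))
      + ((∑' j : ℤ, ENNReal.ofReal (C j * |u (j+1) - u j|))
      + (∑' j : ℤ, ENNReal.ofReal (D (j+1) * |u (j+1) - u j|))) := by
      congr 1
      congr 1
      · exact tsum_shift_up (fun j => ENNReal.ofReal (C j * |u (j+1) - u j|))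
      · rw [← tsum_shift_down (fun j => ENNReal.ofReal (D (j+1) * |u (j+1) - u j|))]
        apply tsum_congr
        intro j
        rw [show j - 1 + 1 = j from by ring]
    _ = ∑' j : ℤ, (ENNReal.ofReal ((1 - C j - D (j+1)) * |u (j+1) - u j|)
      + (ENNReal.ofReal (C j * |u (j+1) - u j|)
      + ENNReal.ofReal (D (j+1) * |u (j+1) - u j|))) := by
      rw [ENNReal.tsum_add, ENNReal.tsum_add]
    _ = TV u := by
      apply tsum_congr
      intro j
      have hco : 0 ≤ 1 - C j - D (j+1) := by have := hCD j; linarith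
      rw [← ENNReal.ofReal_add (mul_nonneg (hC j) (abs_nonneg _)) (mul_nonneg (hD (j+1)) (abs_nonneg _)),
        ← ENNReal.ofReal_add (mul_nonneg hco (abs_nonneg _))
          (add_nonneg (mul_nonneg (hC j) (abs_nonneg _)) (mul_nonneg (hD (j+1)) (abs_nonneg _)))]
      congr 1
      ring

lemma hartenImplicit (v w C D : ℤ → ℝ) (M : ℝ)
    (hC : ∀ j, 0 ≤ C j) (hD : ∀ j, 0 ≤ D j)
    (hCM : ∀ j, C j ≤ M) (hDM : ∀ j, D j ≤ M) (hTV : TV v < ⊤)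
    (h : ∀ j, w j = v j - C j * (v (j+1) - v j) + D j * (v j - v (j-1))) :
    TV v ≤ TV w := by
  have hM : 0 ≤ M := (hC 0).trans (hCM 0)
  have key : ∀ j : ℤ, ENNReal.ofReal |v (j+1) - v j|
      + (ENNReal.ofReal (C j * |v (j+1) - v j|) + ENNReal.ofReal (D (j+1) * |v (j+1) - v j|))
      ≤ ENNReal.ofReal |w (j+1) - w j|
      + (ENNReal.ofReal (C (j+1) * |v (j+1+1) - v (j+1)|) + ENNReal.ofReal (D j * |v j - v (j-1)|)) := by
    intro j
    have h1 : (1 + C j + D (j+1)) * (v (j+1) - v j)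
        = (w (j+1) - w j) + (C (j+1) * (v (j+1+1) - v (j+1)) + D j * (v j - v (j-1))) := by
      have e2 := h (j+1)
      rw [show (j+1) - 1 = j from by ring] at e2
      rw [h j, e2]; ring
    have htri : |v (j+1) - v j| + (C j * |v (j+1) - v j| + D (j+1) * |v (j+1) - v j|)
        ≤ |w (j+1) - w j| + (C (j+1) * |v (j+1+1) - v (j+1)| + D j * |v j - v (j-1)|) := by
      have h2 : (1 + C j + D (j+1)) * |v (j+1) - v j|
          ≤ |w (j+1) - w j| + (C (j+1) * |v (j+1+1) - v (j+1)| + D j * |v j - v (j-1)|) := by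
        have habs : (1 + C j + D (j+1)) * |v (j+1) - v j|
            = |(1 + C j + D (j+1)) * (v (j+1) - v j)| := by
          rw [abs_mul, abs_of_nonneg (show (0:ℝ) ≤ 1 + C j + D (j+1) by
            have := hC j; have := hD (j+1); linarith)]
        rw [habs, h1]
        calc |(w (j+1) - w j) + (C (j+1) * (v (j+1+1) - v (j+1)) + D j * (v j - v (j-1)))|
            ≤ |w (j+1) - w j| + (|C (j+1) * (v (j+1+1) - v (j+1))| + |D j * (v j - v (j-1))|) :=
              (abs_add_le _ _).trans (by gcongr; exact abs_add_le _ _)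
          _ = _ := by
              rw [abs_mul, abs_mul, abs_of_nonneg (hC (j+1)), abs_of_nonneg (hD j)]
      nlinarith [abs_nonneg (v (j+1) - v j)]
    calc ENNReal.ofReal |v (j+1) - v j|
        + (ENNReal.ofReal (C j * |v (j+1) - v j|) + ENNReal.ofReal (D (j+1) * |v (j+1) - v j|))
        = ENNReal.ofReal (|v (j+1) - v j| + (C j * |v (j+1) - v j| + D (j+1) * |v (j+1) - v j|)) := by
          rw [ENNReal.ofReal_add (abs_nonneg _)
              (add_nonneg (mul_nonneg (hC j) (abs_nonneg _)) (mul_nonneg (hD (j+1)) (abs_nonneg _))),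
            ENNReal.ofReal_add (mul_nonneg (hC j) (abs_nonneg _)) (mul_nonneg (hD (j+1)) (abs_nonneg _))]
      _ ≤ ENNReal.ofReal (|w (j+1) - w j| + (C (j+1) * |v (j+1+1) - v (j+1)| + D j * |v j - v (j-1)|)) :=
          ENNReal.ofReal_le_ofReal htri
      _ ≤ _ := by
          rw [ENNReal.ofReal_add (abs_nonneg _)
              (add_nonneg (mul_nonneg (hC (j+1)) (abs_nonneg _)) (mul_nonneg (hD j) (abs_nonneg _))),
            ENNReal.ofReal_add (mul_nonneg (hC (j+1)) (abs_nonneg _)) (mul_nonneg (hD j) (abs_nonneg _))]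
  have hsum : TV v + ((∑' j : ℤ, ENNReal.ofReal (C j * |v (j+1) - v j|))
      + (∑' j : ℤ, ENNReal.ofReal (D (j+1) * |v (j+1) - v j|)))
      ≤ TV w + ((∑' j : ℤ, ENNReal.ofReal (C j * |v (j+1) - v j|))
      + (∑' j : ℤ, ENNReal.ofReal (D (j+1) * |v (j+1) - v j|))) := by
    have h1 := Summable.tsum_le_tsum key ENNReal.summable ENNReal.summable
    rw [ENNReal.tsum_add, ENNReal.tsum_add, ENNReal.tsum_add, ENNReal.tsum_add] at h1
    have e1 : (∑' j : ℤ, ENNReal.ofReal (C (j+1) * |v (j+1+1) - v (j+1)|))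
        = ∑' j : ℤ, ENNReal.ofReal (C j * |v (j+1) - v j|) :=
      tsum_shift_up (fun j => ENNReal.ofReal (C j * |v (j+1) - v j|))
    have e2 : (∑' j : ℤ, ENNReal.ofReal (D j * |v j - v (j-1)|))
        = ∑' j : ℤ, ENNReal.ofReal (D (j+1) * |v (j+1) - v j|) := by
      rw [← tsum_shift_down (fun j => ENNReal.ofReal (D (j+1) * |v (j+1) - v j|))]
      apply tsum_congr
      intro j
      rw [show j - 1 + 1 = j from by ring]
    rw [e1, e2] at h1
    exact h1
  have hfin : (∑' j : ℤ, ENNReal.ofReal (C j * |v (j+1) - v j|))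
      + (∑' j : ℤ, ENNReal.ofReal (D (j+1) * |v (j+1) - v j|)) ≠ ⊤ := by
    have b1 : (∑' j : ℤ, ENNReal.ofReal (C j * |v (j+1) - v j|))
        ≤ ENNReal.ofReal M * TV v := by
      rw [TV, ← ENNReal.tsum_mul_left]
      apply Summable.tsum_le_tsum _ ENNReal.summable ENNReal.summable
      intro j
      rw [← ENNReal.ofReal_mul hM]
      exact ENNReal.ofReal_le_ofReal (by nlinarith [abs_nonneg (v (j+1) - v j), hCM j, hC j])
    have b2 : (∑' j : ℤ, ENNReal.ofReal (D (j+1) * |v (j+1) - v j|))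
        ≤ ENNReal.ofReal M * TV v := by
      rw [TV, ← ENNReal.tsum_mul_left]
      apply Summable.tsum_le_tsum _ ENNReal.summable ENNReal.summable
      intro j
      rw [← ENNReal.ofReal_mul hM]
      exact ENNReal.ofReal_le_ofReal (by nlinarith [abs_nonneg (v (j+1) - v j), hDM (j+1), hD (j+1)])
    have hMT : ENNReal.ofReal M * TV v < ⊤ := ENNReal.mul_lt_top ENNReal.ofReal_lt_top hTV
    exact ne_of_lt (lt_of_le_of_lt (add_le_add b1 b2) (by simpa using ENNReal.add_lt_top.mpr ⟨hMT, hMT⟩))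
  exact (ENNReal.add_le_add_iff_right hfin).mp hsum

/-- Theorem 1, third case (implicit part): for `θ ∈ (0,1)`, the implicit θ-scheme built
from Zalesak's FCT flux without the monotone first step is TVD under `λ|a| < θ/(1−θ)`:
if `v` has finite total variation and solves the θ-scheme starting from `u`, then
`TV(v) ≤ TV(u)`. -/
theorem zalesak_implicit_TVD (a lam θ : ℝ) (ha : a ≠ 0) (hlam : 0 < lam)
    (hθ0 : 0 < θ) (hθ1 : θ < 1) (hCFL : lam * |a| < θ / (1 - θ))
    (u v : ℤ → ℝ) (hv : TV v < ⊤)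
    (hscheme : ∀ j : ℤ, v j = u j
      - lam * (1 - θ) * (numFlux a lam u j - numFlux a lam u (j - 1))
      - lam * θ * (numFlux a lam v j - numFlux a lam v (j - 1))) :
    TV v ≤ TV u := by
  obtain ⟨Cu, Du, hCu0, hDu0, hCDu, hu⟩ := flux_incr a lam ha hlam u
  obtain ⟨Cv, Dv, hCv0, hDv0, hCDv, hvid⟩ := flux_incr a lam ha hlam v
  have h1θ : 0 < 1 - θ := by linarith
  have hlamθ : 0 ≤ lam * θ := by positivity
  have hlam1θ : 0 ≤ lam * (1 - θ) := by positivity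
  set w : ℤ → ℝ := fun j => u j + (lam * (1 - θ) * Cu j) * (u (j+1) - u j)
      - (lam * (1 - θ) * Du j) * (u j - u (j-1)) with hw
  have hw_scheme : ∀ j : ℤ, w j = v j - (lam * θ * Cv j) * (v (j+1) - v j)
      + (lam * θ * Dv j) * (v j - v (j-1)) := by
    intro j
    have hs := hscheme j
    rw [hu j, hvid j] at hs
    simp only [hw]
    linear_combination -hs
  have step1 : TV v ≤ TV w := by
    apply hartenImplicit v w (fun j => lam * θ * Cv j) (fun j => lam * θ * Dv j)
      (lam * θ * (|a| + lam⁻¹))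
      (fun j => mul_nonneg hlamθ (hCv0 j)) (fun j => mul_nonneg hlamθ (hDv0 j))
      (fun j => mul_le_mul_of_nonneg_left (by have := hCDv j j; have := hDv0 j; linarith) hlamθ)
      (fun j => mul_le_mul_of_nonneg_left (by have := hCDv j j; have := hCv0 j; linarith) hlamθ)
      hv hw_scheme
  have step2 : TV w ≤ TV u := by
    apply hartenExplicit u w (fun j => lam * (1 - θ) * Cu j) (fun j => lam * (1 - θ) * Du j)
      (fun j => mul_nonneg hlam1θ (hCu0 j)) (fun j => mul_nonneg hlam1θ (hDu0 j))
      ?_ (fun j => rfl)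
    intro j
    have hsum := hCDu j (j+1)
    have hexp : lam * (1 - θ) * (|a| + lam⁻¹) = lam * |a| * (1 - θ) + (1 - θ) := by
      field_simp
    have hcfl2 : lam * |a| * (1 - θ) < θ := (lt_div_iff₀ h1θ).mp hCFL
    show lam * (1 - θ) * Cu j + lam * (1 - θ) * Du (j + 1) ≤ 1
    have h1 : lam * (1 - θ) * Cu j + lam * (1 - θ) * Du (j + 1)
        = lam * (1 - θ) * (Cu j + Du (j + 1)) := by ring
    rw [h1]
    calc lam * (1 - θ) * (Cu j + Du (j + 1)) ≤ lam * (1 - θ) * (|a| + lam⁻¹) :=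
          mul_le_mul_of_nonneg_left hsum hlam1θ
      _ ≤ 1 := by rw [hexp]; linarith
  exact step1.trans step2
end

section
/- Unconditional TVD of the fully implicit Zalesak FCT (remark following Theorem 1): For θ = 1, Zalesak's FCT scheme without the monotone first step is unconditionally TVD: for every λ > 0 and every a ≠ 0, if u and v are grid functions with TV(v) < ∞ satisfying the fully implicit scheme v_j = u_j − λ[f̂_{j+1/2}(v) − f̂_{j−1/2}(v)] for all j ∈ ℤ, then TV(v) ≤ TV(u). -/

lemma limiter_core (c lam d p q : ℝ) (hc : 0 < c) (hlam : 0 < lam) (s : ℝ)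
    (hs : s = 1 ∧ 0 < d ∨ s = -1 ∧ d < 0) :
    0 ≤ (s * max 0 (min (s * (lam⁻¹ * p)) (min (c * |d|) (s * (lam⁻¹ * q))))) * d ∧
    |s * max 0 (min (s * (lam⁻¹ * p)) (min (c * |d|) (s * (lam⁻¹ * q))))| ≤ c * |d| ∧
    0 ≤ (s * max 0 (min (s * (lam⁻¹ * p)) (min (c * |d|) (s * (lam⁻¹ * q))))) * p ∧
    lam * |s * max 0 (min (s * (lam⁻¹ * p)) (min (c * |d|) (s * (lam⁻¹ * q))))| ≤ |p| ∧
    0 ≤ (s * max 0 (min (s * (lam⁻¹ * p)) (min (c * |d|) (s * (lam⁻¹ * q))))) * q ∧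
    lam * |s * max 0 (min (s * (lam⁻¹ * p)) (min (c * |d|) (s * (lam⁻¹ * q))))| ≤ |q| := by
  have hne : lam ≠ 0 := hlam.ne'
  have hinv : lam * lam⁻¹ = 1 := mul_inv_cancel₀ hne
  set m := max 0 (min (s * (lam⁻¹ * p)) (min (c * |d|) (s * (lam⁻¹ * q)))) with hm
  have hm0 : 0 ≤ m := le_max_left _ _
  have hs1 : |s * m| = m := by
    rcases hs with ⟨h, _⟩ | ⟨h, _⟩ <;> rw [h] <;>
      [rw [one_mul, abs_of_nonneg hm0]; rw [neg_one_mul, abs_neg, abs_of_nonneg hm0]]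
  have hmd : m ≤ c * |d| := by
    apply max_le (by positivity)
    exact le_trans (min_le_right _ _) (min_le_left _ _)
  have hsd : 0 ≤ (s * m) * d := by
    rcases hs with ⟨h, hd⟩ | ⟨h, hd⟩ <;> rw [h] <;> nlinarith
  have hp' : 0 ≤ (s * m) * p ∧ lam * m ≤ |p| ∨ m = 0 := by
    rcases le_or_gt (s * (lam⁻¹ * p)) 0 with h0 | h0
    · right
      rw [hm]
      exact max_eq_left (le_trans (min_le_left _ _) h0)
    · left
      have hmp : m ≤ s * (lam⁻¹ * p) := max_le h0.le (min_le_left _ _)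
      rcases hs with ⟨h, _⟩ | ⟨h, _⟩ <;> rw [h] at h0 hmp ⊢
      · have hp0 : 0 < p := by nlinarith
        rw [abs_of_pos hp0]
        constructor
        · nlinarith
        · nlinarith [mul_le_mul_of_nonneg_left hmp hlam.le]
      · have hp0 : p < 0 := by nlinarith
        rw [abs_of_neg hp0]
        constructor
        · nlinarith
        · nlinarith [mul_le_mul_of_nonneg_left hmp hlam.le]
  have hq' : 0 ≤ (s * m) * q ∧ lam * m ≤ |q| ∨ m = 0 := by
    rcases le_or_gt (s * (lam⁻¹ * q)) 0 with h0 | h0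
    · right
      rw [hm]
      exact max_eq_left (le_trans (le_trans (min_le_right _ _) (min_le_right _ _)) h0)
    · left
      have hmp : m ≤ s * (lam⁻¹ * q) :=
        max_le h0.le (le_trans (min_le_right _ _) (min_le_right _ _))
      rcases hs with ⟨h, _⟩ | ⟨h, _⟩ <;> rw [h] at h0 hmp ⊢
      · have hq0 : 0 < q := by nlinarith
        rw [abs_of_pos hq0]
        constructor
        · nlinarith
        · nlinarith [mul_le_mul_of_nonneg_left hmp hlam.le]
      · have hq0 : q < 0 := by nlinarith
        rw [abs_of_neg hq0]
        constructor
        · nlinarith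
        · nlinarith [mul_le_mul_of_nonneg_left hmp hlam.le]
  refine ⟨hsd, by rw [hs1]; exact hmd, ?_, ?_, ?_, ?_⟩
  · rcases hp' with ⟨h, _⟩ | h
    · exact h
    · rw [h]; simp
  · rw [hs1]
    rcases hp' with ⟨_, h⟩ | h
    · exact h
    · rw [h]; simp [abs_nonneg]
  · rcases hq' with ⟨h, _⟩ | h
    · exact h
    · rw [h]; simp
  · rw [hs1]
    rcases hq' with ⟨_, h⟩ | h
    · exact h
    · rw [h]; simp [abs_nonneg]

/-- Sign and size facts about Zalesak's limited flux, in abstract form. -/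
lemma limiter_facts (c lam d p q : ℝ) (hc : 0 < c) (hlam : 0 < lam) :
    0 ≤ (Real.sign (c * d) *
      max 0 (min (Real.sign (c * d) * (lam⁻¹ * p))
        (min |c * d| (Real.sign (c * d) * (lam⁻¹ * q))))) * d ∧
    |Real.sign (c * d) *
      max 0 (min (Real.sign (c * d) * (lam⁻¹ * p))
        (min |c * d| (Real.sign (c * d) * (lam⁻¹ * q))))| ≤ c * |d| ∧
    0 ≤ (Real.sign (c * d) *
      max 0 (min (Real.sign (c * d) * (lam⁻¹ * p))
        (min |c * d| (Real.sign (c * d) * (lam⁻¹ * q))))) * p ∧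
    lam * |Real.sign (c * d) *
      max 0 (min (Real.sign (c * d) * (lam⁻¹ * p))
        (min |c * d| (Real.sign (c * d) * (lam⁻¹ * q))))| ≤ |p| ∧
    0 ≤ (Real.sign (c * d) *
      max 0 (min (Real.sign (c * d) * (lam⁻¹ * p))
        (min |c * d| (Real.sign (c * d) * (lam⁻¹ * q))))) * q ∧
    lam * |Real.sign (c * d) *
      max 0 (min (Real.sign (c * d) * (lam⁻¹ * p))
        (min |c * d| (Real.sign (c * d) * (lam⁻¹ * q))))| ≤ |q| := by
  have habs : |c * d| = c * |d| := by rw [abs_mul, abs_of_pos hc]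
  rcases lt_trichotomy d 0 with hd | hd | hd
  · have hcd : c * d < 0 := mul_neg_of_pos_of_neg hc hd
    rw [Real.sign_of_neg hcd, habs]
    exact limiter_core c lam d p q hc hlam (-1) (Or.inr ⟨rfl, hd⟩)
  · subst hd
    simp [Real.sign_zero, abs_nonneg]
  · have hcd : 0 < c * d := mul_pos hc hd
    rw [Real.sign_of_pos hcd, habs]
    exact limiter_core c lam d p q hc hlam 1 (Or.inl ⟨rfl, hd⟩)

lemma abs_combo (k d g1 g2 g0 : ℝ) (hk : 0 ≤ k)
    (h1 : 0 ≤ g1 * d) (h1' : |g1| ≤ |d|) (h2 : 0 ≤ g2 * d) (h2' : |g2| ≤ |d|)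
    (h0 : 0 ≤ g0 * d) (h0' : 2 * |g0| ≤ k * |d|) :
    (1 + k) * |d| + |g1| + |g2| - 2 * |g0| ≤ |(1 + k) * d + g1 + g2 - 2 * g0| := by
  rcases lt_trichotomy d 0 with hd | hd | hd
  · have hg1 : g1 ≤ 0 := by nlinarith
    have hg2 : g2 ≤ 0 := by nlinarith
    have hg0 : g0 ≤ 0 := by nlinarith
    rw [abs_of_neg hd] at *
    rw [abs_of_nonpos hg1, abs_of_nonpos hg2, abs_of_nonpos hg0]
    have := neg_le_abs ((1 + k) * d + g1 + g2 - 2 * g0)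
    linarith
  · subst hd
    simp only [abs_zero] at h1' h2' h0'
    have hg1 : g1 = 0 := abs_eq_zero.mp (le_antisymm h1' (abs_nonneg _))
    have hg2 : g2 = 0 := abs_eq_zero.mp (le_antisymm h2' (abs_nonneg _))
    have hg0 : g0 = 0 := abs_eq_zero.mp (le_antisymm (by nlinarith [abs_nonneg g0]) (abs_nonneg _))
    subst hg1; subst hg2; subst hg0
    simp
  · have hg1 : 0 ≤ g1 := by nlinarith
    have hg2 : 0 ≤ g2 := by nlinarith
    have hg0 : 0 ≤ g0 := by nlinarith
    rw [abs_of_pos hd] at *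
    rw [abs_of_nonneg hg1, abs_of_nonneg hg2, abs_of_nonneg hg0]
    have := le_abs_self ((1 + k) * d + g1 + g2 - 2 * g0)
    linarith

/-- The difference of consecutive values. -/
noncomputable def Dd (v : ℤ → ℝ) (j : ℤ) : ℝ := v (j + 1) - v j

/-- The scaled limited antidiffusive flux. -/
noncomputable def Gg (a lam : ℝ) (v : ℤ → ℝ) (j : ℤ) : ℝ := lam * fluxC a lam v j

lemma Gg_facts (a lam : ℝ) (ha : a ≠ 0) (hlam : 0 < lam) (v : ℤ → ℝ) (j : ℤ) :
    0 ≤ Gg a lam v j * Dd v j ∧ 2 * |Gg a lam v j| ≤ lam * |a| * |Dd v j| ∧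
    0 ≤ Gg a lam v j * Dd v (j - 1) ∧ |Gg a lam v j| ≤ |Dd v (j - 1)| ∧
    0 ≤ Gg a lam v j * Dd v (j + 1) ∧ |Gg a lam v j| ≤ |Dd v (j + 1)| := by
  have hc : 0 < |a| / 2 := by positivity
  have key := limiter_facts (|a| / 2) lam (Dd v j) (Dd v (j - 1)) (Dd v (j + 1)) hc hlam
  have e1 : j - 1 + 1 = j := by ring
  have e2 : j + 1 + 1 = j + 2 := by ring
  simp only [Dd, e1, e2] at key ⊢
  have hCeq : fluxC a lam v j =
      Real.sign (|a| / 2 * (v (j + 1) - v j)) *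
        max 0 (min (Real.sign (|a| / 2 * (v (j + 1) - v j)) * (lam⁻¹ * (v j - v (j - 1))))
          (min |(|a| / 2 * (v (j + 1) - v j))|
            (Real.sign (|a| / 2 * (v (j + 1) - v j)) * (lam⁻¹ * (v (j + 2) - v (j + 1)))))) := by
    simp only [fluxC, fluxAD]
  obtain ⟨k1, k2, k3, k4, k5, k6⟩ := key
  rw [← hCeq] at k1 k2 k3 k4 k5 k6
  simp only [Gg]
  rw [abs_mul, abs_of_pos hlam]
  refine ⟨by nlinarith, by nlinarith, by nlinarith, by nlinarith, by nlinarith, by nlinarith⟩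

/-- Remark after Theorem 1: for `θ = 1`, Zalesak's FCT scheme without the monotone first
step is unconditionally TVD: for every `λ > 0` and `a ≠ 0`, any `v` of finite total
variation solving the fully implicit scheme `v_j = u_j − λ[f̂_{j+1/2}(v) − f̂_{j−1/2}(v)]`
satisfies `TV(v) ≤ TV(u)`. -/
theorem zalesak_fully_implicit_TVD (a lam : ℝ) (ha : a ≠ 0) (hlam : 0 < lam)
    (u v : ℤ → ℝ) (hv : TV v < ⊤)
    (hscheme : ∀ j : ℤ,
      v j = u j - lam * (numFlux a lam v j - numFlux a lam v (j - 1))) :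
    TV v ≤ TV u := by
  set P := (a + |a|) / 2 with hPdef
  set N := (|a| - a) / 2 with hNdef
  have hP0 : 0 ≤ P := by rw [hPdef]; nlinarith [neg_abs_le a]
  have hN0 : 0 ≤ N := by rw [hNdef]; nlinarith [le_abs_self a]
  have hPN : P + N = |a| := by rw [hPdef, hNdef]; ring
  -- flux in upwind form
  have hnum : ∀ j : ℤ, numFlux a lam v j = P * v j - N * v (j + 1) + fluxC a lam v j := by
    intro j
    rw [numFlux, hPdef, hNdef]
    ring
  -- the key identity for differences of u
  have hiden : ∀ j : ℤ, u (j + 1) - u j =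
      (1 + (lam * P + lam * N)) * Dd v j + Gg a lam v (j + 1) + Gg a lam v (j - 1)
        - 2 * Gg a lam v j - lam * P * Dd v (j - 1) - lam * N * Dd v (j + 1) := by
    intro j
    have e1 : j - 1 + 1 = j := by ring
    have e2 : j + 1 - 1 = j := by ring
    have e3 : j + 1 + 1 = j + 2 := by ring
    have hu1 := hscheme j
    have hu2 := hscheme (j + 1)
    rw [e2] at hu2
    rw [hnum j, hnum (j - 1)] at hu1
    rw [hnum (j + 1), hnum j] at hu2
    rw [e1] at hu1
    rw [e3] at hu2
    simp only [Dd, Gg, e1, e3]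
    linear_combination hu1 - hu2
  -- pointwise inequality
  have hpoint : ∀ j : ℤ,
      |Dd v j| + lam * P * |Dd v j| + lam * N * |Dd v j|
        + |Gg a lam v (j + 1)| + |Gg a lam v (j - 1)|
      ≤ |u (j + 1) - u j| + lam * P * |Dd v (j - 1)| + lam * N * |Dd v (j + 1)|
        + |Gg a lam v j| + |Gg a lam v j| := by
    intro j
    have e1 : j - 1 + 1 = j := by ring
    have e2 : j + 1 - 1 = j := by ring
    have f1 := Gg_facts a lam ha hlam v (j + 1)
    have f2 := Gg_facts a lam ha hlam v (j - 1)
    have f0 := Gg_facts a lam ha hlam v j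
    rw [e2] at f1
    rw [e1] at f2
    have hk : 0 ≤ lam * P + lam * N := by positivity
    have hk2 : lam * P + lam * N = lam * |a| := by rw [← hPN]; ring
    have combo := abs_combo (lam * P + lam * N) (Dd v j)
      (Gg a lam v (j + 1)) (Gg a lam v (j - 1)) (Gg a lam v j) hk
      f1.2.2.1 f1.2.2.2.1 f2.2.2.2.2.1 f2.2.2.2.2.2 f0.1 (by rw [hk2]; exact f0.2.1)
    have hX : (1 + (lam * P + lam * N)) * Dd v j + Gg a lam v (j + 1) + Gg a lam v (j - 1)
        - 2 * Gg a lam v j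
        = (u (j + 1) - u j) + lam * P * Dd v (j - 1) + lam * N * Dd v (j + 1) := by
      rw [hiden j]; ring
    rw [hX] at combo
    have htri : |(u (j + 1) - u j) + lam * P * Dd v (j - 1) + lam * N * Dd v (j + 1)|
        ≤ |u (j + 1) - u j| + lam * P * |Dd v (j - 1)| + lam * N * |Dd v (j + 1)| := by
      have t1 := abs_add_le ((u (j + 1) - u j) + lam * P * Dd v (j - 1)) (lam * N * Dd v (j + 1))
      have t2 := abs_add_le (u (j + 1) - u j) (lam * P * Dd v (j - 1))
      rw [abs_mul (lam * N), abs_of_nonneg (by positivity : (0:ℝ) ≤ lam * N)] at t1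
      rw [abs_mul (lam * P), abs_of_nonneg (by positivity : (0:ℝ) ≤ lam * P)] at t2
      linarith
    have hexp : (1 + (lam * P + lam * N)) * |Dd v j|
        = |Dd v j| + lam * P * |Dd v j| + lam * N * |Dd v j| := by ring
    linarith
  -- summation
  set A := ∑' j : ℤ, ENNReal.ofReal |Dd v j| with hA
  set Wp := ∑' j : ℤ, ENNReal.ofReal (lam * P * |Dd v j|) with hWp
  set Wn := ∑' j : ℤ, ENNReal.ofReal (lam * N * |Dd v j|) with hWn
  set G := ∑' j : ℤ, ENNReal.ofReal |Gg a lam v j| with hG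
  have hTVv : TV v = A := by rw [hA]; rfl
  have hsum : ∑' j : ℤ, (ENNReal.ofReal |Dd v j| + ENNReal.ofReal (lam * P * |Dd v j|)
        + ENNReal.ofReal (lam * N * |Dd v j|) + ENNReal.ofReal |Gg a lam v (j + 1)|
        + ENNReal.ofReal |Gg a lam v (j - 1)|)
      ≤ ∑' j : ℤ, (ENNReal.ofReal |u (j + 1) - u j|
        + ENNReal.ofReal (lam * P * |Dd v (j - 1)|) + ENNReal.ofReal (lam * N * |Dd v (j + 1)|)
        + ENNReal.ofReal |Gg a lam v j| + ENNReal.ofReal |Gg a lam v j|) := by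
    apply ENNReal.tsum_le_tsum
    intro j
    rw [← ENNReal.ofReal_add (abs_nonneg _) (by positivity),
      ← ENNReal.ofReal_add (by positivity) (by positivity),
      ← ENNReal.ofReal_add (by positivity) (abs_nonneg _),
      ← ENNReal.ofReal_add (by positivity) (abs_nonneg _),
      ← ENNReal.ofReal_add (abs_nonneg _) (by positivity),
      ← ENNReal.ofReal_add (by positivity) (by positivity),
      ← ENNReal.ofReal_add (by positivity) (abs_nonneg _),
      ← ENNReal.ofReal_add (by positivity) (abs_nonneg _)]
    exact ENNReal.ofReal_le_ofReal (hpoint j)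
  rw [ENNReal.tsum_add, ENNReal.tsum_add, ENNReal.tsum_add, ENNReal.tsum_add,
    ENNReal.tsum_add, ENNReal.tsum_add, ENNReal.tsum_add, ENNReal.tsum_add] at hsum
  -- identify shifted sums
  have s1 : ∑' j : ℤ, ENNReal.ofReal |Gg a lam v (j + 1)| = G := by
    rw [hG]; exact (Equiv.addRight (1 : ℤ)).tsum_eq fun j => ENNReal.ofReal |Gg a lam v j|
  have s2 : ∑' j : ℤ, ENNReal.ofReal |Gg a lam v (j - 1)| = G := by
    rw [hG]; exact (Equiv.subRight (1 : ℤ)).tsum_eq fun j => ENNReal.ofReal |Gg a lam v j|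
  have s3 : ∑' j : ℤ, ENNReal.ofReal (lam * P * |Dd v (j - 1)|) = Wp := by
    rw [hWp]; exact (Equiv.subRight (1 : ℤ)).tsum_eq fun j => ENNReal.ofReal (lam * P * |Dd v j|)
  have s4 : ∑' j : ℤ, ENNReal.ofReal (lam * N * |Dd v (j + 1)|) = Wn := by
    rw [hWn]; exact (Equiv.addRight (1 : ℤ)).tsum_eq fun j => ENNReal.ofReal (lam * N * |Dd v j|)
  rw [s1, s2, s3, s4] at hsum
  -- hsum : A + Wp + Wn + G + G ≤ TV u + Wp + Wn + G + G
  have hAfin : A ≠ ⊤ := by rw [← hTVv]; exact hv.ne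
  have hbound : ∀ (c : ℝ) (hc : 0 ≤ c),
      (∑' j : ℤ, ENNReal.ofReal (c * |Dd v j|)) ≠ ⊤ := by
    intro c hc
    have : (∑' j : ℤ, ENNReal.ofReal (c * |Dd v j|))
        = ENNReal.ofReal c * A := by
      rw [hA, ← ENNReal.tsum_mul_left]
      exact tsum_congr fun j => ENNReal.ofReal_mul hc
    rw [this]
    exact ENNReal.mul_ne_top ENNReal.ofReal_ne_top hAfin
  have hWpfin : Wp ≠ ⊤ := by rw [hWp]; exact hbound (lam * P) (by positivity)
  have hWnfin : Wn ≠ ⊤ := by rw [hWn]; exact hbound (lam * N) (by positivity)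
  have hGfin : G ≠ ⊤ := by
    have hle : G ≤ ∑' j : ℤ, ENNReal.ofReal (lam * |a| / 2 * |Dd v j|) := by
      rw [hG]
      apply ENNReal.tsum_le_tsum
      intro j
      apply ENNReal.ofReal_le_ofReal
      have := (Gg_facts a lam ha hlam v j).2.1
      linarith
    exact (lt_of_le_of_lt hle (lt_top_iff_ne_top.mpr (hbound (lam * |a| / 2) (by positivity)))).ne
  have hXfin : Wp + Wn + G + G ≠ ⊤ := by
    simp [ENNReal.add_ne_top, hWpfin, hWnfin, hGfin]
  have hfinal : A + (Wp + Wn + G + G) ≤ TV u + (Wp + Wn + G + G) := by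
    calc A + (Wp + Wn + G + G) = A + Wp + Wn + G + G := by ring
      _ ≤ TV u + Wp + Wn + G + G := hsum
      _ = TV u + (Wp + Wn + G + G) := by ring
  rw [hTVv]
  exact (ENNReal.add_le_add_iff_right hXfin).mp hfinal
end
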